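/- arXiv:1001.0329 — 6 statements merged into one kernel-verified Lean document; each statement's English description precedes it below -/
import Mathlib

section
/- In a residuated lattice, for all a, b and all positive natural numbers n, k: (a ∨ b)^(n·k) ≤ a^n ∨ b^k, where x^m denotes the m-fold product x ⊙ ... ⊙ x. -/
/-- A (commutative, integral) residuated lattice: a bounded lattice whose top is the
monoid unit `1`, with a commutative monoid operation `*` (⊙) and residuum `himp`
satisfying the law of residuation. -/
class ResiduatedLattice (α : Type*) extends Lattice α, CommMonoid α, OrderBot α where
  himp : α → α → α
  le_one : ∀ a : α, a ≤ 1
  le_himp_iff : ∀ a b c : α, a ≤ himp b c ↔ a * b ≤ c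

namespace ResiduatedLattice

variable {α : Type*} [ResiduatedLattice α]

/-- A filter of a residuated lattice: nonempty, closed under ⊙, upward closed. -/
def IsRLFilter (F : Set α) : Prop :=
  F.Nonempty ∧ (∀ a ∈ F, ∀ b ∈ F, a * b ∈ F) ∧ ∀ a ∈ F, ∀ b : α, a ≤ b → b ∈ F

/-- The principal filter generated by `a`: the smallest filter containing `a`. -/
def princ (a : α) : Set α := ⋂₀ {F : Set α | IsRLFilter F ∧ a ∈ F}

/-- The co-annihilator of a set. -/
def coann (X : Set α) : Set α := {a : α | ∀ x ∈ X, a ⊔ x = 1}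

/-- An element is complemented (belongs to the Boolean center). -/
def IsCompl' (a : α) : Prop := ∃ b : α, a ⊔ b = 1 ∧ a ⊓ b = ⊥

end ResiduatedLattice

open ResiduatedLattice

section Aux

variable {α : Type*} [ResiduatedLattice α]

private lemma RL.mul_le_mul_right' {x y : α} (h : x ≤ y) (c : α) : x * c ≤ y * c := by
  rw [← ResiduatedLattice.le_himp_iff]
  exact h.trans ((ResiduatedLattice.le_himp_iff y c (y * c)).mpr le_rfl)

private lemma RL.mul_le_mul' {x y z w : α} (h₁ : x ≤ y) (h₂ : z ≤ w) : x * z ≤ y * w := by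
  calc x * z ≤ y * z := RL.mul_le_mul_right' h₁ z
    _ = z * y := mul_comm _ _
    _ ≤ w * y := RL.mul_le_mul_right' h₂ y
    _ = y * w := mul_comm _ _

private lemma RL.mul_le_left (x y : α) : x * y ≤ x := by
  calc x * y ≤ x * 1 := RL.mul_le_mul' le_rfl (ResiduatedLattice.le_one y)
    _ = x := mul_one x

private lemma RL.mul_sup_le (x u v : α) : x * (u ⊔ v) ≤ x * u ⊔ x * v := by
  rw [mul_comm, ← ResiduatedLattice.le_himp_iff]
  apply sup_le
  · rw [ResiduatedLattice.le_himp_iff, mul_comm]; exact le_sup_left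
  · rw [ResiduatedLattice.le_himp_iff, mul_comm]; exact le_sup_right

private lemma RL.pow_le_one (x : α) (m : ℕ) : x ^ m ≤ 1 := by
  induction m with
  | zero => simp
  | succ d ih =>
    rw [pow_succ]
    calc x ^ d * x ≤ 1 * 1 := RL.mul_le_mul' ih (ResiduatedLattice.le_one x)
      _ = 1 := mul_one 1

private lemma RL.key (a b : α) : ∀ s p q, p + q = s →
    (a ⊔ b) ^ (p + q + 1) ≤ a ^ (p + 1) ⊔ b ^ (q + 1) := by
  intro s
  induction s with
  | zero =>
    intro p q h
    obtain ⟨rfl, rfl⟩ : p = 0 ∧ q = 0 := by omega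
    simp
  | succ t ih =>
    intro p q h
    have step : (a ⊔ b) ^ (p + q + 1) = (a ⊔ b) ^ (p + q) * (a ⊔ b) :=
      pow_succ _ _
    have ha : (a ⊔ b) ^ (p + q) * a ≤ a ^ (p + 1) ⊔ b ^ (q + 1) := by
      rcases Nat.eq_zero_or_pos p with hp | hp
      · subst hp
        exact le_sup_left.trans' (by simpa [pow_one] using RL.mul_le_left a ((a ⊔ b) ^ q) |>.trans_eq' (mul_comm _ _))
      · obtain ⟨p', rfl⟩ : ∃ p', p = p' + 1 := ⟨p - 1, by omega⟩
        have ihp : (a ⊔ b) ^ (p' + q + 1) ≤ a ^ (p' + 1) ⊔ b ^ (q + 1) :=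
          ih p' q (by omega)
        have : (a ⊔ b) ^ (p' + 1 + q) * a ≤ (a ^ (p' + 1) ⊔ b ^ (q + 1)) * a := by
          apply RL.mul_le_mul_right'
          have : p' + 1 + q = p' + q + 1 := by omega
          rw [this]; exact ihp
        refine this.trans ?_
        rw [mul_comm]
        refine (RL.mul_sup_le a _ _).trans (sup_le ?_ ?_)
        · rw [mul_comm, ← pow_succ]; exact le_sup_left
        · exact le_sup_right.trans' (by rw [mul_comm]; exact RL.mul_le_left _ _)
    have hb : (a ⊔ b) ^ (p + q) * b ≤ a ^ (p + 1) ⊔ b ^ (q + 1) := by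
      rcases Nat.eq_zero_or_pos q with hq | hq
      · subst hq
        exact le_sup_right.trans' (by simpa [pow_one] using RL.mul_le_left b ((a ⊔ b) ^ p) |>.trans_eq' (mul_comm _ _))
      · obtain ⟨q', rfl⟩ : ∃ q', q = q' + 1 := ⟨q - 1, by omega⟩
        have ihq : (a ⊔ b) ^ (p + q' + 1) ≤ a ^ (p + 1) ⊔ b ^ (q' + 1) :=
          ih p q' (by omega)
        have : (a ⊔ b) ^ (p + (q' + 1)) * b ≤ (a ^ (p + 1) ⊔ b ^ (q' + 1)) * b := by
          apply RL.mul_le_mul_right'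
          have : p + (q' + 1) = p + q' + 1 := by omega
          rw [this]; exact ihq
        refine this.trans ?_
        rw [mul_comm]
        refine (RL.mul_sup_le b _ _).trans (sup_le ?_ ?_)
        · exact le_sup_left.trans' (by rw [mul_comm]; exact RL.mul_le_left _ _)
        · rw [mul_comm, ← pow_succ]; exact le_sup_right
    rw [step]
    exact (RL.mul_sup_le _ a b).trans (sup_le ha hb)

end Aux

theorem sup_pow_mul_le {α : Type*} [ResiduatedLattice α] (a b : α) (n k : ℕ)
    (hn : 0 < n) (hk : 0 < k) : (a ⊔ b) ^ (n * k) ≤ a ^ n ⊔ b ^ k := by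
  obtain ⟨p, rfl⟩ : ∃ p, n = p + 1 := ⟨n - 1, by omega⟩
  obtain ⟨q, rfl⟩ : ∃ q, k = q + 1 := ⟨k - 1, by omega⟩
  have hm : (p + 1) * (q + 1) = (p + q + 1) + p * q := by ring
  rw [hm, pow_add]
  calc (a ⊔ b) ^ (p + q + 1) * (a ⊔ b) ^ (p * q)
      ≤ (a ⊔ b) ^ (p + q + 1) := RL.mul_le_left _ _
    _ ≤ a ^ (p + 1) ⊔ b ^ (q + 1) := RL.key a b (p + q) p q rfl
end

section
/- In a residuated lattice A, for every complemented element e and every a ∈ A: ¬e → a = e ∨ a. -/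
open ResiduatedLattice

section Aux
variable {α : Type*} [ResiduatedLattice α]

lemma my_mul_le_mul_right {a b : α} (h : a ≤ b) (c : α) : a * c ≤ b * c := by
  have : b ≤ himp c (b * c) := (le_himp_iff b c (b * c)).2 le_rfl
  exact (le_himp_iff a c (b * c)).1 (h.trans this)

lemma my_mul_le_left' (a b : α) : a * b ≤ a := by
  have : a * b ≤ a * 1 := by
    rw [mul_comm a b, mul_comm a 1]
    exact my_mul_le_mul_right (ResiduatedLattice.le_one b) a
  simpa using this

lemma my_mul_le_right (a b : α) : a * b ≤ b := by
  rw [mul_comm]; exact my_mul_le_left' b a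

lemma my_mul_sup (a b c : α) : a * (b ⊔ c) = a * b ⊔ a * c := by
  apply le_antisymm
  · rw [mul_comm]
    apply (le_himp_iff _ _ _).1
    apply sup_le
    · exact (le_himp_iff _ _ _).2 (by rw [mul_comm]; exact le_sup_left)
    · exact (le_himp_iff _ _ _).2 (by rw [mul_comm]; exact le_sup_right)
  · apply sup_le
    · rw [mul_comm a b, mul_comm a (b ⊔ c)]
      exact my_mul_le_mul_right le_sup_left a
    · rw [mul_comm a c, mul_comm a (b ⊔ c)]
      exact my_mul_le_mul_right le_sup_right a

end Aux

theorem neg_himp_eq_sup {α : Type*} [ResiduatedLattice α] (e a : α)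
    (he : IsCompl' e) :
    ResiduatedLattice.himp (ResiduatedLattice.himp e ⊥) a = e ⊔ a := by
  obtain ⟨f, hsup, hinf⟩ := he
  have hef : e * f ≤ ⊥ := le_trans (le_inf (my_mul_le_left' e f) (my_mul_le_right e f)) hinf.le
  have hne : himp e ⊥ = f := by
    apply le_antisymm
    · have : himp e ⊥ * (e ⊔ f) ≤ f := by
        rw [my_mul_sup]
        apply sup_le
        · exact le_trans ((le_himp_iff _ _ _).1 le_rfl) bot_le
        · exact my_mul_le_right _ _
      simpa [hsup] using this
    · exact (le_himp_iff _ _ _).2 (by rw [mul_comm]; exact hef)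
  rw [hne]
  apply le_antisymm
  · have : himp f a * (e ⊔ f) ≤ e ⊔ a := by
      rw [my_mul_sup]
      apply sup_le
      · exact le_trans (my_mul_le_right _ _) le_sup_left
      · exact le_trans ((le_himp_iff _ _ _).1 le_rfl) le_sup_right
    simpa [hsup] using this
  · apply (le_himp_iff _ _ _).2
    rw [mul_comm, my_mul_sup]
    apply sup_le
    · exact le_trans (by rw [mul_comm]; exact hef) bot_le
    · exact my_mul_le_right f a
end

section
/- For any nonempty subset X of a residuated lattice A, the co-annihilator X^⊤ = {a ∈ A | ∀x ∈ X, a ∨ x = 1} is a filter of A. -/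
open ResiduatedLattice

namespace ResiduatedLattice

variable {α : Type*} [ResiduatedLattice α]

lemma mul_le_mul_right' {a b : α} (h : a ≤ b) (c : α) : a * c ≤ b * c := by
  rw [← le_himp_iff]
  exact le_trans h ((le_himp_iff b c (b * c)).2 le_rfl)

lemma mul_le_left' (a b : α) : a * b ≤ a := by
  calc a * b ≤ a * 1 := by rw [mul_comm a b, mul_comm a 1];
                           exact mul_le_mul_right' (le_one b) a
    _ = a := mul_one a

lemma mul_sup_le {a b c d : α} (h1 : a * c ≤ d) (h2 : b * c ≤ d) :
    (a ⊔ b) * c ≤ d := by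
  rw [← le_himp_iff]
  exact sup_le ((le_himp_iff a c d).2 h1) ((le_himp_iff b c d).2 h2)

end ResiduatedLattice

theorem coann_isFilter {α : Type*} [ResiduatedLattice α] (X : Set α)
    (hX : X.Nonempty) : IsRLFilter (coann X) := by
  refine ⟨⟨1, fun x hx => ?_⟩, fun a ha b hb => fun x hx => ?_, fun a ha b hab x hx => ?_⟩
  · exact le_antisymm (ResiduatedLattice.le_one _) (le_sup_left)
  · have ha' := ha x hx
    have hb' := hb x hx
    refine le_antisymm (ResiduatedLattice.le_one _) ?_
    have key : (a ⊔ x) * (b ⊔ x) ≤ a * b ⊔ x := by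
      apply ResiduatedLattice.mul_sup_le
      · rw [mul_comm]
        apply ResiduatedLattice.mul_sup_le
        · exact le_trans (le_of_eq (mul_comm b a)) le_sup_left
        · exact le_trans (ResiduatedLattice.mul_le_left' x a) le_sup_right
      · exact le_trans (ResiduatedLattice.mul_le_left' x (b ⊔ x)) le_sup_right
    calc (1 : α) = 1 * 1 := (one_mul 1).symm
      _ = (a ⊔ x) * (b ⊔ x) := by rw [ha', hb']
      _ ≤ a * b ⊔ x := key
  · have := ha x hx
    refine le_antisymm (ResiduatedLattice.le_one _) ?_
    calc (1 : α) = a ⊔ x := (ha x hx).symm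
      _ ≤ b ⊔ x := sup_le_sup_right hab x
end

section
/- Let A be a residuated lattice with reticulation (L, λ). Then the restriction of λ to the Boolean center B(A) is an isomorphism of Boolean algebras from B(A) onto B(L). -/
open ResiduatedLattice


namespace ResiduatedLatticeAux

open ResiduatedLattice

variable {α : Type*} [ResiduatedLattice α]

lemma rl_mul_le_left (a b : α) : a * b ≤ a := by
  rw [mul_comm]
  exact (le_himp_iff b a a).mp (le_trans (le_one b)
    ((le_himp_iff 1 a a).mpr (le_of_eq (one_mul a))))

lemma rl_mul_le_right (a b : α) : a * b ≤ b := by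
  rw [mul_comm]; exact rl_mul_le_left b a

lemma rl_mul_le_mul_right {b c : α} (a : α) (h : b ≤ c) : a * b ≤ a * c := by
  rw [mul_comm]
  exact (le_himp_iff b a (a * c)).mp
    (le_trans h ((le_himp_iff c a (a * c)).mpr (le_of_eq (mul_comm c a))))

lemma rl_mul_le_mul_left {a b : α} (h : a ≤ b) (c : α) : a * c ≤ b * c := by
  rw [mul_comm a c, mul_comm b c]; exact rl_mul_le_mul_right c h

lemma rl_mul_sup (a b c : α) : a * (b ⊔ c) = a * b ⊔ a * c := by
  apply le_antisymm
  · rw [mul_comm]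
    apply (le_himp_iff _ a _).mp
    apply sup_le
    · exact (le_himp_iff b a _).mpr (le_trans (le_of_eq (mul_comm b a)) le_sup_left)
    · exact (le_himp_iff c a _).mpr (le_trans (le_of_eq (mul_comm c a)) le_sup_right)
  · exact sup_le (rl_mul_le_mul_right a le_sup_left) (rl_mul_le_mul_right a le_sup_right)

lemma rl_mul_eq_bot {a b : α} (h : a ⊓ b = ⊥) : a * b = ⊥ :=
  le_antisymm (h ▸ le_inf (rl_mul_le_left a b) (rl_mul_le_right a b)) bot_le

lemma rl_idem {a b : α} (h1 : a ⊔ b = 1) (h2 : a ⊓ b = ⊥) : a * a = a := by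
  calc a * a = a * a ⊔ ⊥ := (sup_bot_eq _).symm
    _ = a * a ⊔ a * b := by rw [rl_mul_eq_bot h2]
    _ = a * (a ⊔ b) := (rl_mul_sup a a b).symm
    _ = a := by rw [h1, mul_one]

lemma rl_pow_eq {a : α} (h : a * a = a) : ∀ n : ℕ, 0 < n → a ^ n = a := by
  intro n hn
  induction n with
  | zero => exact absurd hn (lt_irrefl 0)
  | succ m ih =>
    rcases Nat.eq_zero_or_pos m with hm | hm
    · subst hm; exact pow_one a
    · rw [pow_succ, ih hm, h]

lemma rl_sup_pow {a b : α} (h : a ⊔ b = 1) : ∀ n : ℕ, 0 < n → a ⊔ b ^ n = 1 := by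
  intro n hn
  induction n with
  | zero => exact absurd hn (lt_irrefl 0)
  | succ m ih =>
    rcases Nat.eq_zero_or_pos m with hm | hm
    · subst hm; simpa [pow_one] using h
    · apply le_antisymm (le_one _)
      have h1 : (1 : α) = (a ⊔ b) * (a ⊔ b ^ m) := by rw [h, ih hm, one_mul]
      rw [h1]
      calc (a ⊔ b) * (a ⊔ b ^ m)
          = (a ⊔ b) * a ⊔ (a ⊔ b) * b ^ m := rl_mul_sup _ _ _
        _ = (a ⊔ b) * a ⊔ (b ^ m * a ⊔ b ^ m * b) := by
            rw [mul_comm (a ⊔ b) (b ^ m), rl_mul_sup]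
        _ ≤ a ⊔ b ^ (m + 1) := by
            apply sup_le
            · exact le_sup_of_le_left (rl_mul_le_right _ _)
            · apply sup_le
              · exact le_sup_of_le_left (rl_mul_le_right _ _)
              · rw [← pow_succ]; exact le_sup_right

lemma rl_sup_pow_pow {a b : α} (h : a ⊔ b = 1) (n : ℕ) (hn : 0 < n) :
    a ^ n ⊔ b ^ n = 1 := by
  have h1 : a ⊔ b ^ n = 1 := rl_sup_pow h n hn
  have h2 : b ^ n ⊔ a = 1 := by rwa [sup_comm] at h1
  have h3 : b ^ n ⊔ a ^ n = 1 := rl_sup_pow h2 n hn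
  rwa [sup_comm] at h3

end ResiduatedLatticeAux

section Reticulation

variable {α : Type*} [ResiduatedLattice α] {L : Type*} [DistribLattice L] [BoundedOrder L]

/-- Co-annihilator in a bounded (distributive) lattice. -/
def coannL (Y : Set L) : Set L := {x : L | ∀ y ∈ Y, x ⊔ y = ⊤}

/-- Complemented element of the bounded lattice `L`. -/
def IsComplL (f : L) : Prop := ∃ g : L, f ⊔ g = ⊤ ∧ f ⊓ g = ⊥

theorem reticulation_boolean_center_iso (l : α → L)
    (hsurj : Function.Surjective l)
    (hmul : ∀ a b : α, l (a * b) = l a ⊓ l b)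
    (hsup : ∀ a b : α, l (a ⊔ b) = l a ⊔ l b)
    (hbot : l ⊥ = ⊥) (hone : l 1 = ⊤)
    (hord : ∀ a b : α, l a ≤ l b ↔ ∃ n : ℕ, 0 < n ∧ a ^ n ≤ b) :
    (∀ a : α, IsCompl' a → IsComplL (l a)) ∧
    (∀ a b : α, IsCompl' a → IsCompl' b → l a = l b → a = b) ∧
    (∀ f : L, IsComplL f → ∃ a : α, IsCompl' a ∧ l a = f) ∧
    (∀ a b : α, IsCompl' a → IsCompl' b → l (a ⊓ b) = l a ⊓ l b) ∧
    (∀ a b : α, IsCompl' a → IsCompl' b → l (a ⊔ b) = l a ⊔ l b) ∧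
    (∀ a b : α, IsCompl' a → a ⊔ b = 1 → a ⊓ b = ⊥ →
      l a ⊔ l b = ⊤ ∧ l a ⊓ l b = ⊥) := by
  -- l is monotone
  have hmono : ∀ a b : α, a ≤ b → l a ≤ l b := fun a b h =>
    (hord a b).mpr ⟨1, one_pos, by simpa [pow_one] using h⟩
  have hpow : ∀ (a : α) (n : ℕ), 0 < n → l (a ^ n) = l a := by
    intro a n hn
    induction n with
    | zero => exact absurd hn (lt_irrefl 0)
    | succ m ih =>
      rcases Nat.eq_zero_or_pos m with hm | hm
      · subst hm; rw [pow_one]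
      · rw [pow_succ, hmul, ih hm, inf_idem]
  have hinf : ∀ a b : α, l (a ⊓ b) = l a ⊓ l b := by
    intro a b
    apply le_antisymm (le_inf (hmono _ _ inf_le_left) (hmono _ _ inf_le_right))
    rw [← hmul]
    exact hmono _ _ (le_inf (ResiduatedLatticeAux.rl_mul_le_left a b)
      (ResiduatedLatticeAux.rl_mul_le_right a b))
  have hcompl : ∀ a b : α, a ⊔ b = 1 → a ⊓ b = ⊥ → l a ⊔ l b = ⊤ ∧ l a ⊓ l b = ⊥ := by
    intro a b h1 h2
    constructor
    · rw [← hsup, h1, hone]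
    · rw [← hmul, ResiduatedLatticeAux.rl_mul_eq_bot h2, hbot]
  refine ⟨?_, ?_, ?_, ?_, ?_, fun a b _ h1 h2 => hcompl a b h1 h2⟩
  · rintro a ⟨b, h1, h2⟩
    exact ⟨l b, hcompl a b h1 h2⟩
  · rintro a b ⟨a', ha1, ha2⟩ ⟨b', hb1, hb2⟩ heq
    have hia := ResiduatedLatticeAux.rl_idem ha1 ha2
    have hib := ResiduatedLatticeAux.rl_idem hb1 hb2
    obtain ⟨n, hn, hab⟩ := (hord a b).mp heq.le
    obtain ⟨m, hm, hba⟩ := (hord b a).mp heq.ge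
    rw [ResiduatedLatticeAux.rl_pow_eq hia n hn] at hab
    rw [ResiduatedLatticeAux.rl_pow_eq hib m hm] at hba
    exact le_antisymm hab hba
  · rintro f ⟨g, hfg1, hfg2⟩
    obtain ⟨a, ha⟩ := hsurj f
    obtain ⟨b, hb⟩ := hsurj g
    -- a ⊔ b = 1
    have h1 : a ⊔ b = 1 := by
      have : l 1 ≤ l (a ⊔ b) := by rw [hone, hsup, ha, hb, hfg1]
      obtain ⟨n, _, hle⟩ := (hord 1 (a ⊔ b)).mp this
      rw [one_pow] at hle
      exact le_antisymm (le_one _) hle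
    -- (a*b)^n = ⊥ for some n
    have h2 : l (a * b) ≤ l ⊥ := by rw [hmul, ha, hb, hfg2, hbot]
    obtain ⟨n, hn, hle⟩ := (hord (a * b) ⊥).mp h2
    have hmulbot : a ^ n * b ^ n = ⊥ := by
      rw [← mul_pow]; exact le_antisymm hle bot_le
    have hsupn : a ^ n ⊔ b ^ n = 1 := ResiduatedLatticeAux.rl_sup_pow_pow h1 n hn
    have hinfn : a ^ n ⊓ b ^ n = ⊥ := by
      apply le_antisymm _ bot_le
      calc a ^ n ⊓ b ^ n = (a ^ n ⊓ b ^ n) * (a ^ n ⊔ b ^ n) := by rw [hsupn, mul_one]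
        _ = (a ^ n ⊓ b ^ n) * a ^ n ⊔ (a ^ n ⊓ b ^ n) * b ^ n :=
            ResiduatedLatticeAux.rl_mul_sup _ _ _
        _ ≤ b ^ n * a ^ n ⊔ a ^ n * b ^ n :=
            sup_le_sup (ResiduatedLatticeAux.rl_mul_le_mul_left inf_le_right _)
              (ResiduatedLatticeAux.rl_mul_le_mul_left inf_le_left _)
        _ = ⊥ := by rw [mul_comm (b ^ n) (a ^ n), hmulbot, sup_idem]
    exact ⟨a ^ n, ⟨b ^ n, hsupn, hinfn⟩, by rw [hpow a n hn, ha]⟩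
  · exact fun a b _ _ => hinf a b
  · exact fun a b _ _ => hsup a b


end Reticulation
end

section
/- Let A be a residuated lattice with reticulation (L, λ). For any subset X of A, λ(X^⊤) = (λ(X))^⊤, i.e., the image under λ of the co-annihilator of X equals the co-annihilator of the image λ(X). -/
open ResiduatedLattice

section Reticulation

variable {α : Type*} [ResiduatedLattice α] {L : Type*} [DistribLattice L] [BoundedOrder L]

theorem reticulation_image_coann (l : α → L)
    (hsurj : Function.Surjective l)
    (hmul : ∀ a b : α, l (a * b) = l a ⊓ l b)
    (hsup : ∀ a b : α, l (a ⊔ b) = l a ⊔ l b)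
    (hbot : l ⊥ = ⊥) (hone : l 1 = ⊤)
    (hord : ∀ a b : α, l a ≤ l b ↔ ∃ n : ℕ, 0 < n ∧ a ^ n ≤ b) (X : Set α) :
    l '' coann X = coannL (l '' X) := by
  ext y
  constructor
  · rintro ⟨a, ha, rfl⟩ _ ⟨x, hx, rfl⟩
    rw [← hsup, ha x hx, hone]
  · intro hy
    obtain ⟨a, rfl⟩ := hsurj y
    refine ⟨a, fun x hx => ?_, rfl⟩
    have h : l (a ⊔ x) = ⊤ := by rw [hsup]; exact hy (l x) ⟨x, hx, rfl⟩
    have h2 : l 1 ≤ l (a ⊔ x) := by rw [h, hone]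
    obtain ⟨n, hn, h3⟩ := (hord 1 (a ⊔ x)).mp h2
    rw [one_pow] at h3
    exact le_antisymm (ResiduatedLattice.le_one _) h3


end Reticulation
end

section
/- Let A be a residuated lattice with reticulation (L, λ), and define μ : CoAnn(A) → CoAnn(L) by μ(F) = λ(F). Then μ is an isomorphism of Boolean algebras. -/
open ResiduatedLattice

section Reticulation

variable {α : Type*} [ResiduatedLattice α] {L : Type*} [DistribLattice L] [BoundedOrder L]

/-! Since `l b = ⊤` forces `1 = 1 ^ n ≤ b`, the relation `a ⊔ x = 1` holds exactly when
`l a ⊔ l x = ⊤`. Hence `X^⊤` is the full `l`-preimage of `(l X)^⊤`: with surjectivity of `l`,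
co-annihilators are mapped onto co-annihilators, injectively because each co-annihilator is
saturated under `l`. Meets are preserved since `F ∩ G = (X ∪ X')^⊤` for `F = X^⊤`, `G = X'^⊤`. -/

theorem ResiduatedLattice.coann_union (X X' : Set α) : coann (X ∪ X') = coann X ∩ coann X' := by
  ext a
  simp only [coann, Set.mem_ofPred_eq, Set.mem_inter_iff, Set.mem_union, or_imp, forall_and]

theorem coannL_union (Y Y' : Set L) : coannL (Y ∪ Y') = coannL Y ∩ coannL Y' := by
  ext f
  simp only [coannL, Set.mem_ofPred_eq, Set.mem_inter_iff, Set.mem_union, or_imp, forall_and]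

section ReticulationMap

variable {l : α → L}

theorem eq_one_of_map_eq_top (hone : l 1 = ⊤)
    (hord : ∀ a b : α, l a ≤ l b ↔ ∃ n : ℕ, 0 < n ∧ a ^ n ≤ b) {b : α} (hb : l b = ⊤) :
    b = 1 := by
  obtain ⟨n, -, hn⟩ := (hord 1 b).mp (by rw [hone, hb])
  rw [one_pow] at hn
  exact le_antisymm (ResiduatedLattice.le_one b) hn

theorem sup_eq_one_iff_map_sup_eq_top (hsup : ∀ a b : α, l (a ⊔ b) = l a ⊔ l b)
    (hone : l 1 = ⊤) (htop : ∀ b : α, l b = ⊤ → b = 1) (a x : α) :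
    a ⊔ x = 1 ↔ l a ⊔ l x = ⊤ := by
  rw [← hsup]
  exact ⟨fun h => h ▸ hone, htop _⟩

theorem coann_eq_preimage_coannL (hsup_one : ∀ a x : α, a ⊔ x = 1 ↔ l a ⊔ l x = ⊤)
    (X : Set α) : coann X = l ⁻¹' coannL (l '' X) := by
  ext a
  simp only [coann, coannL, Set.mem_ofPred_eq, Set.mem_preimage, Set.forall_mem_image, hsup_one]

theorem image_coann (hsurj : Function.Surjective l)
    (hsup_one : ∀ a x : α, a ⊔ x = 1 ↔ l a ⊔ l x = ⊤) (X : Set α) :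
    l '' coann X = coannL (l '' X) := by
  rw [coann_eq_preimage_coannL hsup_one, Set.image_preimage_eq _ hsurj]

theorem preimage_image_coann (hsurj : Function.Surjective l)
    (hsup_one : ∀ a x : α, a ⊔ x = 1 ↔ l a ⊔ l x = ⊤) (X : Set α) :
    l ⁻¹' (l '' coann X) = coann X := by
  rw [image_coann hsurj hsup_one, ← coann_eq_preimage_coannL hsup_one]

end ReticulationMap

theorem reticulation_coann_boolean_iso_general (l : α → L)
    (hsurj : Function.Surjective l)
    (hsup : ∀ a b : α, l (a ⊔ b) = l a ⊔ l b)
    (hone : l 1 = ⊤)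
    (hord : ∀ a b : α, l a ≤ l b ↔ ∃ n : ℕ, 0 < n ∧ a ^ n ≤ b) :
    (∀ F : Set α, (∃ X : Set α, F = coann X) → ∃ Y : Set L, l '' F = coannL Y) ∧
    (∀ F G : Set α, (∃ X : Set α, F = coann X) → (∃ X : Set α, G = coann X) →
      l '' F = l '' G → F = G) ∧
    (∀ G : Set L, (∃ Y : Set L, G = coannL Y) →
      ∃ F : Set α, (∃ X : Set α, F = coann X) ∧ l '' F = G) ∧
    (∀ F G : Set α, (∃ X : Set α, F = coann X) → (∃ X : Set α, G = coann X) →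
      l '' (F ∩ G) = l '' F ∩ l '' G) ∧
    (∀ F : Set α, (∃ X : Set α, F = coann X) → l '' coann F = coannL (l '' F)) ∧
    (l '' ({1} : Set α) = ({⊤} : Set L)) ∧
    (l '' (Set.univ : Set α) = (Set.univ : Set L)) := by
  have hsup_one : ∀ a x : α, a ⊔ x = 1 ↔ l a ⊔ l x = ⊤ :=
    sup_eq_one_iff_map_sup_eq_top hsup hone fun _ => eq_one_of_map_eq_top hone hord
  have himage := image_coann hsurj hsup_one
  refine ⟨?_, ?_, ?_, ?_, ?_, ?_, ?_⟩
  · rintro F ⟨X, rfl⟩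
    exact ⟨l '' X, himage X⟩
  · rintro F G ⟨X, rfl⟩ ⟨X', rfl⟩ h
    rw [← preimage_image_coann hsurj hsup_one X, h, preimage_image_coann hsurj hsup_one]
  · rintro G ⟨Y, rfl⟩
    exact ⟨coann (l ⁻¹' Y), ⟨_, rfl⟩, by rw [himage, Set.image_preimage_eq Y hsurj]⟩
  · rintro F G ⟨X, rfl⟩ ⟨X', rfl⟩
    rw [← coann_union, himage, Set.image_union, coannL_union, himage, himage]
  · exact fun F _ => himage F
  · rw [Set.image_singleton, hone]
  · rw [Set.image_univ, hsurj.range_eq]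

theorem reticulation_coann_boolean_iso (l : α → L)
    (hsurj : Function.Surjective l)
    (hmul : ∀ a b : α, l (a * b) = l a ⊓ l b)
    (hsup : ∀ a b : α, l (a ⊔ b) = l a ⊔ l b)
    (hbot : l ⊥ = ⊥) (hone : l 1 = ⊤)
    (hord : ∀ a b : α, l a ≤ l b ↔ ∃ n : ℕ, 0 < n ∧ a ^ n ≤ b) :
    (∀ F : Set α, (∃ X : Set α, F = coann X) → ∃ Y : Set L, l '' F = coannL Y) ∧
    (∀ F G : Set α, (∃ X : Set α, F = coann X) → (∃ X : Set α, G = coann X) →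
      l '' F = l '' G → F = G) ∧
    (∀ G : Set L, (∃ Y : Set L, G = coannL Y) →
      ∃ F : Set α, (∃ X : Set α, F = coann X) ∧ l '' F = G) ∧
    (∀ F G : Set α, (∃ X : Set α, F = coann X) → (∃ X : Set α, G = coann X) →
      l '' (F ∩ G) = l '' F ∩ l '' G) ∧
    (∀ F : Set α, (∃ X : Set α, F = coann X) → l '' coann F = coannL (l '' F)) ∧
    (l '' ({1} : Set α) = ({⊤} : Set L)) ∧
    (l '' (Set.univ : Set α) = (Set.univ : Set L)) :=
  reticulation_coann_boolean_iso_general l hsurj hsup hone hord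

end Reticulation
end
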